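/- Let r, c, v, f_1,…,f_m, g, W, Z and the lattice Gibbs measure μ = Z^{-1} e^{-W} ρ^{⊗m} be as in the context. Then μ satisfies the FKG inequality: for all continuous functions H_1, H_2 : ℝ^m → ℝ that are monotonically increasing in each coordinate (with respect to the coordinatewise order on ℝ^m) and exponentially bounded (|H_i(η)| ≤ K e^{κ(|η_1|+⋯+|η_m|)} for some K, κ > 0), one has ∫_{ℝ^m} H_1 H_2 dμ ≥ (∫_{ℝ^m} H_1 dμ)(∫_{ℝ^m} H_2 dμ). -/

import Mathlib

open MeasureTheory

noncomputable def mconv (μ ν : Measure ℝ) : Measure ℝ :=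
  (μ.prod ν).map (fun p => p.1 + p.2)

/-- `n`-fold convolution power of a measure on `ℝ`, with `r^{*0} = δ₀`. -/
noncomputable def convPow (r : Measure ℝ) : ℕ → Measure ℝ
  | 0 => Measure.dirac 0
  | n + 1 => mconv (convPow r n) r

/-- The compound Poisson measure `ρ_{c,r} = e^{-c} ∑_{n} (c^n / n!) r^{*n}`. -/
noncomputable def cPoisson (c : ℝ) (r : Measure ℝ) : Measure ℝ :=
  Measure.sum (fun n : ℕ =>
    ENNReal.ofReal (Real.exp (-c) * c ^ n / n.factorial) • convPow r n)

/-!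
Concavity of `v` and nonnegativity of the `f j` and of `g` make `W` submodular on the
lattice `ℝ^m`, so the density `e^{-W}` is log-supermodular. The Ahlswede–Daykin four
functions inequality holds on a chain by symmetrisation, extends to products by Fubini,
and passes from `ρ^{⊗m}` to `e^{-W} ρ^{⊗m}`; applied to `H₁`, `H₂`, `H₁ H₂` and `1` it is
the FKG inequality for nonnegative monotone observables. A shift gives it for bounded
ones, and truncation with dominated convergence for exponentially bounded ones, which
are integrable because `|W η| ≤ κ ∑ |η j|` and `ρ` has exponential moments of all orders
(`r` has bounded support).
-/

open ENNReal ProbabilityTheory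

theorem ENNReal.add_le_add_of_mul_le_mul {a b p s : ℝ≥0∞} (ha : a ≤ p) (hb : b ≤ p)
    (h : a * b ≤ p * s) : a + b ≤ p + s := by
  rcases eq_or_ne p ⊤ with rfl | hp
  · simp
  rcases eq_or_ne s ⊤ with rfl | hs
  · simp
  lift p to NNReal using hp
  lift s to NNReal using hs
  lift a to NNReal using ne_top_of_le_ne_top coe_ne_top ha
  lift b to NNReal using ne_top_of_le_ne_top coe_ne_top hb
  norm_cast at *
  rw [← NNReal.coe_le_coe] at *
  push_cast at *
  -- `p (a + b) ≤ p² + ab`, since `(p - a)(p - b) ≥ 0`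
  nlinarith [mul_nonneg (sub_nonneg.2 ha) (sub_nonneg.2 hb), NNReal.coe_nonneg a,
    NNReal.coe_nonneg b]

theorem mul_add_mul_le_of_four_functions {α : Type*} [LinearOrder α]
    {f₁ f₂ f₃ f₄ : α → ℝ≥0∞} (h : ∀ x y, f₁ x * f₂ y ≤ f₃ (x ⊔ y) * f₄ (x ⊓ y)) (x y : α) :
    f₁ x * f₂ y + f₁ y * f₂ x ≤ f₃ x * f₄ y + f₃ y * f₄ x := by
  wlog hxy : x ≤ y generalizing x y
  · rw [add_comm (f₁ x * f₂ y), add_comm (f₃ x * f₄ y)]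
    exact this y x (le_of_not_ge hxy)
  have h₁ := h x y
  have h₂ := h y x
  have h₃ := h x x
  have h₄ := h y y
  simp only [sup_of_le_left, sup_of_le_right, inf_of_le_left, inf_of_le_right, hxy, sup_idem,
    inf_idem] at h₁ h₂ h₃ h₄
  rw [add_comm (f₃ x * f₄ y)]
  refine ENNReal.add_le_add_of_mul_le_mul h₁ h₂ ?_
  calc f₁ x * f₂ y * (f₁ y * f₂ x) = f₁ x * f₂ x * (f₁ y * f₂ y) := by ring
    _ ≤ f₃ x * f₄ x * (f₃ y * f₄ y) := mul_le_mul' h₃ h₄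
    _ = f₃ y * f₄ x * (f₃ x * f₄ y) := by ring

theorem abs_max_neg_min_le {N : ℝ} (hN : 0 ≤ N) (y : ℝ) : |max (-N) (min y N)| ≤ N :=
  abs_le.2 ⟨le_max_left _ _, max_le (by linarith) (min_le_right _ _)⟩

theorem abs_max_neg_min_le_abs {N : ℝ} (hN : 0 ≤ N) (y : ℝ) : |max (-N) (min y N)| ≤ |y| :=
  abs_le.2 ⟨le_max_of_le_right (le_min (neg_abs_le y) (by linarith [abs_nonneg y])),
    max_le (by linarith [abs_nonneg y]) ((min_le_left _ _).trans (le_abs_self y))⟩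

theorem tendsto_max_neg_min (y : ℝ) :
    Filter.Tendsto (fun N : ℕ => max (-(N : ℝ)) (min y N)) Filter.atTop (nhds y) := by
  refine tendsto_const_nhds.congr' ?_
  filter_upwards [Filter.eventually_ge_atTop ⌈|y|⌉₊] with N hN
  have hy : |y| ≤ N := (Nat.le_ceil _).trans (by exact_mod_cast hN)
  rw [min_eq_left (abs_le.1 hy).2, max_eq_right (abs_le.1 hy).1]

section FourFunctions

variable {α β : Type*} [MeasurableSpace α] [MeasurableSpace β]

def FourFunctionsInequality [Lattice α] (μ : Measure α) : Prop :=
  ∀ f₁ f₂ f₃ f₄ : α → ℝ≥0∞, Measurable f₁ → Measurable f₂ → Measurable f₃ → Measurable f₄ →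
    (∀ x y, f₁ x * f₂ y ≤ f₃ (x ⊔ y) * f₄ (x ⊓ y)) →
    (∫⁻ x, f₁ x ∂μ) * ∫⁻ x, f₂ x ∂μ ≤ (∫⁻ x, f₃ x ∂μ) * ∫⁻ x, f₄ x ∂μ

namespace FourFunctionsInequality

theorem of_linearOrder [LinearOrder α] (μ : Measure α) : FourFunctionsInequality μ := by
  intro f₁ f₂ f₃ f₄ h₁ h₂ h₃ h₄ h
  have double : ∀ u w : α → ℝ≥0∞, Measurable u → Measurable w →
      ∫⁻ x, ∫⁻ y, (u x * w y + u y * w x) ∂μ ∂μ = 2 * ((∫⁻ x, u x ∂μ) * ∫⁻ x, w x ∂μ) := by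
    intro u w hu hw
    simp only [lintegral_add_left (hw.const_mul _), lintegral_const_mul _ hw,
      lintegral_mul_const _ hu, lintegral_add_left (hu.mul_const _)]
    ring
  refine (ENNReal.mul_le_mul_iff_right two_ne_zero ofNat_ne_top).1 ?_
  rw [← double f₁ f₂ h₁ h₂, ← double f₃ f₄ h₃ h₄]
  exact lintegral_mono fun x => lintegral_mono fun y => mul_add_mul_le_of_four_functions h x y

theorem dirac [Lattice α] (a : α) : FourFunctionsInequality (Measure.dirac a) := by
  intro f₁ f₂ f₃ f₄ h₁ h₂ h₃ h₄ h
  simpa [lintegral_dirac' a h₁, lintegral_dirac' a h₂, lintegral_dirac' a h₃,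
    lintegral_dirac' a h₄] using h a a

theorem prod [Lattice α] [Lattice β] {μ : Measure α} {ν : Measure β} [SFinite ν]
    (hμ : FourFunctionsInequality μ) (hν : FourFunctionsInequality ν) :
    FourFunctionsInequality (μ.prod ν) := by
  intro f₁ f₂ f₃ f₄ h₁ h₂ h₃ h₄ h
  rw [lintegral_prod _ h₁.aemeasurable, lintegral_prod _ h₂.aemeasurable,
    lintegral_prod _ h₃.aemeasurable, lintegral_prod _ h₄.aemeasurable]
  refine hμ _ _ _ _ h₁.lintegral_prod_right' h₂.lintegral_prod_right'
    h₃.lintegral_prod_right' h₄.lintegral_prod_right' fun x x' => ?_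
  exact hν _ _ _ _ (h₁.comp measurable_prodMk_left) (h₂.comp measurable_prodMk_left)
    (h₃.comp measurable_prodMk_left) (h₄.comp measurable_prodMk_left)
    fun y y' => h (x, y) (x', y')

theorem of_measurePreserving [Lattice α] [Lattice β] {μ : Measure α} {ν : Measure β}
    (hν : FourFunctionsInequality ν) (e : α ≃ᵐ β) (he : MeasurePreserving e μ ν)
    (hsup : ∀ x y, e (x ⊔ y) = e x ⊔ e y) (hinf : ∀ x y, e (x ⊓ y) = e x ⊓ e y) :
    FourFunctionsInequality μ := by
  intro f₁ f₂ f₃ f₄ h₁ h₂ h₃ h₄ h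
  have hcomp : ∀ f : α → ℝ≥0∞, ∫⁻ x, f x ∂μ = ∫⁻ y, f (e.symm y) ∂ν := fun f => by
    rw [← he.lintegral_comp_emb e.measurableEmbedding]
    simp
  simp only [hcomp]
  refine hν _ _ _ _ (h₁.comp e.symm.measurable) (h₂.comp e.symm.measurable)
    (h₃.comp e.symm.measurable) (h₄.comp e.symm.measurable) fun y y' => ?_
  have hsup' : e.symm (y ⊔ y') = e.symm y ⊔ e.symm y' := by
    rw [e.symm_apply_eq, hsup]; simp
  have hinf' : e.symm (y ⊓ y') = e.symm y ⊓ e.symm y' := by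
    rw [e.symm_apply_eq, hinf]; simp
  simpa only [Function.comp_apply, hsup', hinf'] using h (e.symm y) (e.symm y')

theorem pi [LinearOrder α] (ρ : Measure α) [SigmaFinite ρ] :
    ∀ n : ℕ, FourFunctionsInequality (Measure.pi fun _ : Fin n => ρ)
  | 0 => by
    rw [Measure.pi_of_empty]
    exact dirac _
  | n + 1 =>
    ((of_linearOrder ρ).prod (pi ρ n)).of_measurePreserving _
      (measurePreserving_piFinSuccAbove (fun _ => ρ) 0) (fun _ _ => rfl) (fun _ _ => rfl)

theorem withDensity [Lattice α] {μ : Measure α} (hμ : FourFunctionsInequality μ)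
    {ψ : α → ℝ≥0∞} (hψ : Measurable ψ)
    (hψsup : ∀ x y, ψ x * ψ y ≤ ψ (x ⊔ y) * ψ (x ⊓ y)) :
    FourFunctionsInequality (μ.withDensity ψ) := by
  intro f₁ f₂ f₃ f₄ h₁ h₂ h₃ h₄ h
  simp only [lintegral_withDensity_eq_lintegral_mul _ hψ, h₁, h₂, h₃, h₄]
  refine hμ _ _ _ _ (hψ.mul h₁) (hψ.mul h₂) (hψ.mul h₃) (hψ.mul h₄) fun x y => ?_
  calc (ψ * f₁) x * (ψ * f₂) y = f₁ x * f₂ y * (ψ x * ψ y) := by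
        simp only [Pi.mul_apply]; ring
    _ ≤ f₃ (x ⊔ y) * f₄ (x ⊓ y) * (ψ (x ⊔ y) * ψ (x ⊓ y)) :=
        mul_le_mul' (h x y) (hψsup x y)
    _ = (ψ * f₃) (x ⊔ y) * (ψ * f₄) (x ⊓ y) := by simp only [Pi.mul_apply]; ring

variable [Lattice α] {μ : Measure α}

theorem lintegral_mul_lintegral_le (hμ : FourFunctionsInequality μ) {F G : α → ℝ≥0∞}
    (hF : Measurable F) (hG : Measurable G) (hFm : Monotone F) (hGm : Monotone G) :
    (∫⁻ x, F x ∂μ) * ∫⁻ x, G x ∂μ ≤ (∫⁻ x, F x * G x ∂μ) * μ Set.univ := by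
  rw [← lintegral_one]
  exact hμ _ _ _ _ hF hG (hF.mul hG) measurable_const fun x y =>
    (mul_one (F (x ⊔ y) * G (x ⊔ y))).symm ▸
      mul_le_mul' (hFm le_sup_left) (hGm le_sup_right)

theorem tilted (hμ : FourFunctionsInequality μ) {f : α → ℝ} (hf : Measurable f)
    (hsup : ∀ x y, f x + f y ≤ f (x ⊔ y) + f (x ⊓ y)) :
    FourFunctionsInequality (μ.tilted f) := by
  have hZ : 0 ≤ ∫ x, Real.exp (f x) ∂μ := integral_nonneg fun x => (Real.exp_pos _).le
  refine hμ.withDensity (by fun_prop) fun x y => ?_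
  rw [← ofReal_mul (by positivity), ← ofReal_mul (by positivity)]
  refine ofReal_le_ofReal ?_
  rw [div_mul_div_comm, div_mul_div_comm, ← Real.exp_add, ← Real.exp_add]
  exact div_le_div_of_nonneg_right (Real.exp_le_exp.2 (hsup x y)) (mul_nonneg hZ hZ)

variable [IsProbabilityMeasure μ]

theorem integral_mul_integral_le_of_nonneg (hμ : FourFunctionsInequality μ) {F G : α → ℝ}
    (hF : Measurable F) (hG : Measurable G) (hFm : Monotone F) (hGm : Monotone G)
    (hF0 : ∀ x, 0 ≤ F x) (hG0 : ∀ x, 0 ≤ G x) (hFG : Integrable (fun x => F x * G x) μ) :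
    (∫ x, F x ∂μ) * ∫ x, G x ∂μ ≤ ∫ x, F x * G x ∂μ := by
  rw [integral_eq_lintegral_of_nonneg_ae (.of_forall hF0) hF.aestronglyMeasurable,
    integral_eq_lintegral_of_nonneg_ae (.of_forall hG0) hG.aestronglyMeasurable,
    integral_eq_lintegral_of_nonneg_ae (.of_forall fun x => mul_nonneg (hF0 x) (hG0 x))
      hFG.aestronglyMeasurable, ← toReal_mul]
  refine toReal_mono hFG.lintegral_lt_top.ne ?_
  have := hμ.lintegral_mul_lintegral_le hF.ennreal_ofReal hG.ennreal_ofReal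
    (fun _ _ h => ofReal_le_ofReal (hFm h)) (fun _ _ h => ofReal_le_ofReal (hGm h))
  simpa [ofReal_mul (hF0 _)] using this

theorem integral_mul_integral_le_of_abs_le (hμ : FourFunctionsInequality μ) {F G : α → ℝ}
    (hF : Measurable F) (hG : Measurable G) (hFm : Monotone F) (hGm : Monotone G) {N : ℝ}
    (hFN : ∀ x, |F x| ≤ N) (hGN : ∀ x, |G x| ≤ N) :
    (∫ x, F x ∂μ) * ∫ x, G x ∂μ ≤ ∫ x, F x * G x ∂μ := by
  have hL2 : ∀ u : α → ℝ, Measurable u → (∀ x, |u x| ≤ N) →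
      MemLp u 2 μ ∧ MemLp (fun x => u x + N) 2 μ ∧ ∀ x, 0 ≤ u x + N := fun u hu huN =>
    ⟨.of_bound hu.aestronglyMeasurable N (.of_forall huN),
      .of_bound (hu.add_const N).aestronglyMeasurable (N + |N|)
        (.of_forall fun x => (abs_add_le _ _).trans (add_le_add_left (huN x) _)),
      fun x => by linarith [(abs_le.1 (huN x)).1]⟩
  obtain ⟨hFL, hFNL, hFN0⟩ := hL2 F hF hFN
  obtain ⟨hGL, hGNL, hGN0⟩ := hL2 G hG hGN
  -- the covariance is invariant under the shift by `N`, which makes both functions nonnegative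
  have hcov : 0 ≤ cov[fun x => F x + N, fun x => G x + N; μ] := by
    rw [covariance_eq_sub hFNL hGNL, sub_nonneg]
    exact hμ.integral_mul_integral_le_of_nonneg (hF.add_const N) (hG.add_const N)
      (hFm.add_const N) (hGm.add_const N) hFN0 hGN0 (hFNL.integrable_mul hGNL)
  rwa [covariance_add_const_left (hFL.integrable one_le_two), covariance_add_const_right
    (hGL.integrable one_le_two), covariance_eq_sub hFL hGL, sub_nonneg] at hcov

theorem integral_mul_integral_le (hμ : FourFunctionsInequality μ) {F G : α → ℝ}
    (hF : Measurable F) (hG : Measurable G) (hFm : Monotone F) (hGm : Monotone G)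
    (hFi : Integrable F μ) (hGi : Integrable G μ) (hFGi : Integrable (fun x => F x * G x) μ) :
    (∫ x, F x ∂μ) * ∫ x, G x ∂μ ≤ ∫ x, F x * G x ∂μ := by
  set T : ℕ → ℝ → ℝ := fun N y => max (-(N : ℝ)) (min y N)
  have hTc (N : ℕ) : Continuous (T N) := by fun_prop
  have hTm (N : ℕ) : Monotone (T N) := monotone_const.max (monotone_id.min monotone_const)
  have hTle (N : ℕ) (y : ℝ) : |T N y| ≤ |y| := abs_max_neg_min_le_abs N.cast_nonneg y
  have hTF := tendsto_integral_of_dominated_convergence _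
    (fun N => ((hTc N).measurable.comp hF).aestronglyMeasurable) hFi.norm
    (fun N => .of_forall fun x => hTle N (F x))
    (.of_forall fun x => tendsto_max_neg_min (F x))
  have hTG := tendsto_integral_of_dominated_convergence _
    (fun N => ((hTc N).measurable.comp hG).aestronglyMeasurable) hGi.norm
    (fun N => .of_forall fun x => hTle N (G x))
    (.of_forall fun x => tendsto_max_neg_min (G x))
  have hTFG := tendsto_integral_of_dominated_convergence _
    (fun N =>
      (((hTc N).measurable.comp hF).mul ((hTc N).measurable.comp hG)).aestronglyMeasurable)
    hFGi.norm (fun N => .of_forall fun x => by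
      simpa only [Pi.mul_apply, Function.comp_apply, norm_mul, Real.norm_eq_abs, abs_mul]
        using
        mul_le_mul (hTle N (F x)) (hTle N (G x)) (abs_nonneg _) (abs_nonneg _))
    (.of_forall fun x => (tendsto_max_neg_min (F x)).mul (tendsto_max_neg_min (G x)))
  refine le_of_tendsto_of_tendsto' (hTF.mul hTG) hTFG fun N => ?_
  exact hμ.integral_mul_integral_le_of_abs_le ((hTc N).measurable.comp hF)
    ((hTc N).measurable.comp hG) ((hTm N).comp hFm) ((hTm N).comp hGm)
    (fun x => abs_max_neg_min_le N.cast_nonneg (F x))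
    (fun x => abs_max_neg_min_le N.cast_nonneg (G x))

end FourFunctionsInequality

end FourFunctions

section CompoundPoisson

open Real

variable {r : Measure ℝ}

instance isProbabilityMeasure_convPow [IsProbabilityMeasure r] (n : ℕ) :
    IsProbabilityMeasure (convPow r n) := by
  induction n with
  | zero => exact Measure.dirac.isProbabilityMeasure
  | succ n ih => exact (inferInstance : IsProbabilityMeasure ((convPow r n).conv r))

theorem isProbabilityMeasure_cPoisson {c : ℝ} (hc : 0 ≤ c) (r : Measure ℝ)
    [IsProbabilityMeasure r] : IsProbabilityMeasure (cPoisson c r) := by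
  lift c to NNReal using hc
  have hpoisson := hasSum_one_poissonMeasure c
  constructor
  rw [cPoisson, Measure.sum_apply _ MeasurableSet.univ]
  simp only [Measure.smul_apply, measure_univ, smul_eq_mul, mul_one]
  rw [← ENNReal.ofReal_tsum_of_nonneg (fun n => by positivity) hpoisson.summable,
    hpoisson.tsum_eq, ofReal_one]

theorem lintegral_exp_mul_abs_mconv_le {κ : ℝ} (hκ : 0 ≤ κ) (μ ν : Measure ℝ) [SFinite ν] :
    ∫⁻ t, ENNReal.ofReal (exp (κ * |t|)) ∂(mconv μ ν)
      ≤ (∫⁻ t, ENNReal.ofReal (exp (κ * |t|)) ∂μ) *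
        ∫⁻ t, ENNReal.ofReal (exp (κ * |t|)) ∂ν := by
  rw [show mconv μ ν = μ.conv ν from rfl, Measure.lintegral_conv (by fun_prop),
    ← lintegral_lintegral_mul (by fun_prop) (by fun_prop)]
  refine lintegral_mono fun s => lintegral_mono fun t => ?_
  rw [← ofReal_mul (exp_pos _).le, ← exp_add, ← mul_add]
  gcongr
  exact abs_add_le s t

theorem lintegral_exp_mul_abs_convPow_le [SFinite r] {κ : ℝ} (hκ : 0 ≤ κ) {B : ℝ≥0∞}
    (hB : ∫⁻ t, ENNReal.ofReal (exp (κ * |t|)) ∂r ≤ B) (n : ℕ) :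
    ∫⁻ t, ENNReal.ofReal (exp (κ * |t|)) ∂(convPow r n) ≤ B ^ n := by
  induction n with
  | zero => simp [convPow]
  | succ n ih =>
    calc _ ≤ (∫⁻ t, ENNReal.ofReal (exp (κ * |t|)) ∂(convPow r n))
          * ∫⁻ t, ENNReal.ofReal (exp (κ * |t|)) ∂r := lintegral_exp_mul_abs_mconv_le hκ _ _
      _ ≤ B ^ n * B := mul_le_mul' ih hB
      _ = B ^ (n + 1) := (pow_succ _ _).symm

theorem lintegral_exp_mul_abs_le_of_support [IsProbabilityMeasure r] {C κ : ℝ}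
    (hsupp : r (Set.Icc (-C) C)ᶜ = 0) (hκ : 0 ≤ κ) :
    ∫⁻ t, ENNReal.ofReal (exp (κ * |t|)) ∂r ≤ ENNReal.ofReal (exp (κ * C)) := by
  have hmem : ∀ᵐ t ∂r, t ∈ Set.Icc (-C) C := ae_iff.2 hsupp
  calc _ ≤ ∫⁻ _, ENNReal.ofReal (exp (κ * C)) ∂r := lintegral_mono_ae <| by
        filter_upwards [hmem] with t ht
        gcongr
        exact abs_le.2 ht
    _ = ENNReal.ofReal (exp (κ * C)) := by simp

theorem lintegral_exp_mul_abs_cPoisson_lt_top [IsProbabilityMeasure r] {c C κ : ℝ}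
    (hc : 0 ≤ c) (hsupp : r (Set.Icc (-C) C)ᶜ = 0) (hκ : 0 ≤ κ) :
    ∫⁻ t, ENNReal.ofReal (exp (κ * |t|)) ∂(cPoisson c r) < ⊤ := by
  set B := exp (κ * C)
  have hsum : Summable fun n : ℕ => exp (-c) * (c * B) ^ n / n.factorial :=
    ((summable_pow_div_factorial (c * B)).mul_left (exp (-c))).congr fun n => by ring
  rw [cPoisson, lintegral_sum_measure]
  calc _ ≤ ∑' n : ℕ, ENNReal.ofReal (exp (-c) * (c * B) ^ n / n.factorial) :=
        ENNReal.tsum_le_tsum fun n => by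
          rw [lintegral_smul_measure, smul_eq_mul]
          calc _ ≤ ENNReal.ofReal (exp (-c) * c ^ n / n.factorial) * ENNReal.ofReal B ^ n :=
                mul_le_mul' le_rfl (lintegral_exp_mul_abs_convPow_le hκ
                  (lintegral_exp_mul_abs_le_of_support hsupp hκ) n)
            _ = _ := by
                rw [← ofReal_pow (exp_pos _).le, ← ofReal_mul (by positivity)]
                congr 1
                ring
    _ = ENNReal.ofReal (∑' n : ℕ, exp (-c) * (c * B) ^ n / n.factorial) :=
        (ENNReal.ofReal_tsum_of_nonneg (fun n => by positivity) hsum).symm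
    _ < ⊤ := ofReal_lt_top

theorem integrable_exp_mul_abs_cPoisson [IsProbabilityMeasure r] {c C κ : ℝ} (hc : 0 ≤ c)
    (hsupp : r (Set.Icc (-C) C)ᶜ = 0) (hκ : 0 ≤ κ) :
    Integrable (fun t => exp (κ * |t|)) (cPoisson c r) :=
  ⟨by fun_prop, (hasFiniteIntegral_iff_ofReal (.of_forall fun _ => (exp_pos _).le)).2
    (lintegral_exp_mul_abs_cPoisson_lt_top hc hsupp hκ)⟩

theorem integrable_exp_mul_sum_abs_pi_cPoisson [IsProbabilityMeasure r] {c C κ : ℝ} {m : ℕ}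
    (hc : 0 ≤ c) (hsupp : r (Set.Icc (-C) C)ᶜ = 0) (hκ : 0 ≤ κ) :
    Integrable (fun η : Fin m → ℝ => exp (κ * ∑ j, |η j|))
      (Measure.pi fun _ => cPoisson c r) := by
  have := isProbabilityMeasure_cPoisson hc r
  simpa only [Finset.mul_sum, exp_sum] using
    Integrable.fintype_prod (f := fun _ t => exp (κ * |t|)) fun _ =>
      integrable_exp_mul_abs_cPoisson hc hsupp hκ

theorem integrable_exp_pi_cPoisson_of_le [IsProbabilityMeasure r] {c C κ : ℝ} {m : ℕ}
    (hc : 0 ≤ c) (hsupp : r (Set.Icc (-C) C)ᶜ = 0) (hκ : 0 ≤ κ) {f : (Fin m → ℝ) → ℝ}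
    (hf : Measurable f) (hfle : ∀ η, f η ≤ κ * ∑ j, |η j|) :
    Integrable (fun η => exp (f η)) (Measure.pi fun _ => cPoisson c r) :=
  (integrable_exp_mul_sum_abs_pi_cPoisson hc hsupp hκ).mono' (by fun_prop)
    (.of_forall fun η => by
      rw [norm_of_nonneg (exp_pos _).le]
      exact exp_le_exp.2 (hfle η))

theorem integrable_tilted_pi_cPoisson [IsProbabilityMeasure r] {c C κ₀ : ℝ} {m : ℕ}
    (hc : 0 ≤ c) (hsupp : r (Set.Icc (-C) C)ᶜ = 0) (hκ₀ : 0 ≤ κ₀) {f : (Fin m → ℝ) → ℝ}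
    (hf : Measurable f) (hfle : ∀ η, f η ≤ κ₀ * ∑ j, |η j|) {u : (Fin m → ℝ) → ℝ}
    (hu : Measurable u) {K κ : ℝ} (hκ : 0 ≤ κ)
    (hub : ∀ η, |u η| ≤ K * exp (κ * ∑ j, |η j|)) :
    Integrable u ((Measure.pi fun _ => cPoisson c r).tilted f) := by
  rw [integrable_tilted_iff (integrable_exp_pi_cPoisson_of_le hc hsupp hκ₀ hf hfle)]
  have hdom := (integrable_exp_mul_sum_abs_pi_cPoisson (m := m) hc hsupp
    (add_nonneg hκ₀ hκ)).const_mul K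
  refine hdom.mono' (by fun_prop) (.of_forall fun η => ?_)
  calc ‖exp (f η) • u η‖ = exp (f η) * |u η| := by
        rw [smul_eq_mul, norm_mul, norm_of_nonneg (exp_pos _).le, Real.norm_eq_abs]
    _ ≤ exp (κ₀ * ∑ j, |η j|) * (K * exp (κ * ∑ j, |η j|)) :=
        mul_le_mul (exp_le_exp.2 (hfle η)) (hub η) (abs_nonneg _) (exp_pos _).le
    _ = K * exp ((κ₀ + κ) * ∑ j, |η j|) := by rw [add_mul, exp_add]; ring

end CompoundPoisson

section LatticeEnergy

open Real Finset

theorem ConcaveOn.map_add_map_le_of_add_eq {v : ℝ → ℝ} (hv : ConcaveOn ℝ Set.univ v)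
    {p q u w : ℝ} (hpu : p ≤ u) (hqu : q ≤ u) (hsum : u + w = p + q) :
    v u + v w ≤ v p + v q := by
  rcases (show w ≤ u by linarith).eq_or_lt with rfl | hwu
  · obtain rfl : p = w := by linarith
    obtain rfl : q = p := by linarith
    rfl
  -- `p` and `q` are the convex combinations `λ w + (1 - λ) u` and `(1 - λ) w + λ u`
  set l := (u - p) / (u - w)
  have hl : l * (u - w) = u - p := div_mul_cancel₀ _ (by linarith)
  have hl0 : 0 ≤ l := div_nonneg (by linarith) (by linarith)
  have hl1 : l ≤ 1 := (div_le_one (by linarith)).2 (by linarith)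
  have hp := hv.2 (Set.mem_univ w) (Set.mem_univ u) hl0 (by linarith) (add_sub_cancel l 1)
  have hq := hv.2 (Set.mem_univ w) (Set.mem_univ u) (by linarith) hl0 (sub_add_cancel 1 l)
  simp only [smul_eq_mul] at hp hq
  rw [show l * w + (1 - l) * u = p by linarith] at hp
  rw [show (1 - l) * w + l * u = q by linarith] at hq
  linarith

theorem concaveOn_univ_of_deriv_deriv_nonpos {v : ℝ → ℝ} (hv : ContDiff ℝ 2 v)
    (hv'' : ∀ t, deriv (deriv v) t ≤ 0) : ConcaveOn ℝ Set.univ v := by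
  have hv' : ContDiff ℝ 1 (deriv v) := (contDiff_succ_iff_deriv.1 hv).2.2
  exact concaveOn_univ_of_deriv2_nonpos (hv.differentiable two_ne_zero)
    (hv'.differentiable one_ne_zero) (by simpa using hv'')

theorem abs_le_mul_abs_of_abs_deriv_le {v : ℝ → ℝ} (hv : Differentiable ℝ v) (hv0 : v 0 = 0)
    {b : ℝ} (hv' : ∀ t, |deriv v t| ≤ b) (t : ℝ) : |v t| ≤ b * |t| := by
  simpa [hv0] using Convex.norm_image_sub_le_of_norm_deriv_le (fun x _ => hv x)
    (fun x _ => hv' x) convex_univ (Set.mem_univ 0) (Set.mem_univ t)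

noncomputable def latticeEnergy {d m : ℕ} (v : ℝ → ℝ) (f : Fin m → (Fin d → ℝ) → ℝ)
    (g : (Fin d → ℝ) → ℝ) (η : Fin m → ℝ) : ℝ :=
  ∫ x, v (∑ j, η j * f j x) * g x

variable {d m : ℕ} {v : ℝ → ℝ} {f : Fin m → (Fin d → ℝ) → ℝ} {g : (Fin d → ℝ) → ℝ}

theorem integrable_latticeEnergy_integrand (hv : Continuous v) (hf : ∀ j, Continuous (f j))
    (hg : Continuous g) (hgs : HasCompactSupport g) (η : Fin m → ℝ) :
    Integrable fun x => v (∑ j, η j * f j x) * g x :=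
  ((by fun_prop : Continuous fun x => v (∑ j, η j * f j x)).mul hg
    ).integrable_of_hasCompactSupport hgs.mul_left

theorem measurable_latticeEnergy (hv : Continuous v) (hf : ∀ j, Continuous (f j))
    (hg : Continuous g) : Measurable (latticeEnergy v f g) :=
  (StronglyMeasurable.integral_prod_right'
    (f := fun p : (Fin m → ℝ) × (Fin d → ℝ) => v (∑ j, p.1 j * f j p.2) * g p.2)
    (by fun_prop : Continuous _).stronglyMeasurable).measurable

theorem latticeEnergy_sup_add_inf_le (hv : ConcaveOn ℝ Set.univ v) (hvc : Continuous v)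
    (hf0 : ∀ j x, 0 ≤ f j x) (hf : ∀ j, Continuous (f j)) (hg0 : ∀ x, 0 ≤ g x)
    (hg : Continuous g) (hgs : HasCompactSupport g) (η ζ : Fin m → ℝ) :
    latticeEnergy v f g (η ⊔ ζ) + latticeEnergy v f g (η ⊓ ζ)
      ≤ latticeEnergy v f g η + latticeEnergy v f g ζ := by
  have hint := integrable_latticeEnergy_integrand hvc hf hg hgs
  simp only [latticeEnergy]
  rw [← integral_add (hint _) (hint _), ← integral_add (hint _) (hint _)]
  refine integral_mono ((hint _).add (hint _)) ((hint _).add (hint _)) fun x => ?_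
  have hle : ∀ ξ : Fin m → ℝ, ξ ≤ η ⊔ ζ → ∑ j, ξ j * f j x ≤ ∑ j, (η ⊔ ζ) j * f j x :=
    fun ξ hξ => sum_le_sum fun j _ => mul_le_mul_of_nonneg_right (hξ j) (hf0 j x)
  have hsum : ∑ j, (η ⊔ ζ) j * f j x + ∑ j, (η ⊓ ζ) j * f j x
      = ∑ j, η j * f j x + ∑ j, ζ j * f j x := by
    simp only [← sum_add_distrib, ← add_mul, Pi.sup_apply, Pi.inf_apply, max_add_min]
  simpa only [← add_mul] using mul_le_mul_of_nonneg_right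
    (hv.map_add_map_le_of_add_eq (hle η le_sup_left) (hle ζ le_sup_right) hsum) (hg0 x)

theorem abs_latticeEnergy_le {b : ℝ} (hb : 0 ≤ b) (hvb : ∀ t, |v t| ≤ b * |t|)
    (hvc : Continuous v) (hf0 : ∀ j x, 0 ≤ f j x) (hf : ∀ j, Continuous (f j))
    (hg0 : ∀ x, 0 ≤ g x) (hg : Continuous g) (hgs : HasCompactSupport g) (η : Fin m → ℝ) :
    |latticeEnergy v f g η| ≤ b * (∫ x, (∑ j, f j x) * g x) * ∑ j, |η j| := by
  have hsumint : Integrable fun x => (∑ j, f j x) * g x :=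
    ((continuous_finsetSum _ fun j _ => hf j).mul hg).integrable_of_hasCompactSupport
      hgs.mul_left
  have hpt : ∀ x, ‖v (∑ j, η j * f j x) * g x‖ ≤
      b * (∑ j, |η j|) * ((∑ j, f j x) * g x) := by
    intro x
    have hsum : |∑ j, η j * f j x| ≤ (∑ j, |η j|) * ∑ j, f j x := by
      rw [sum_mul]
      refine (abs_sum_le_sum_abs _ _).trans (sum_le_sum fun j _ => ?_)
      rw [abs_mul, abs_of_nonneg (hf0 j x)]
      exact mul_le_mul_of_nonneg_left
        (single_le_sum (fun k _ => hf0 k x) (mem_univ j)) (abs_nonneg _)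
    rw [Real.norm_eq_abs, abs_mul, abs_of_nonneg (hg0 x), ← mul_assoc, mul_assoc b]
    exact mul_le_mul_of_nonneg_right
      ((hvb _).trans (mul_le_mul_of_nonneg_left hsum hb)) (hg0 x)
  calc |latticeEnergy v f g η| ≤ ∫ x, ‖v (∑ j, η j * f j x) * g x‖ := by
        rw [latticeEnergy, ← Real.norm_eq_abs]
        exact norm_integral_le_integral_norm _
    _ ≤ ∫ x, b * (∑ j, |η j|) * ((∑ j, f j x) * g x) :=
        integral_mono (integrable_latticeEnergy_integrand hvc hf hg hgs η).norm
          (hsumint.const_mul _) hpt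
    _ = b * (∫ x, (∑ j, f j x) * g x) * ∑ j, |η j| := by rw [integral_const_mul]; ring

end LatticeEnergy

theorem lattice_gibbs_FKG_general
    (d m : ℕ) (C : ℝ)
    (r : Measure ℝ) [IsProbabilityMeasure r] (hsupp : r (Set.Icc (-C) C)ᶜ = 0)
    (c : ℝ) (hc : 0 < c)
    (v : ℝ → ℝ) (hv : ContDiff ℝ 2 v) (hv0 : v 0 = 0)
    (b : ℝ) (hv' : ∀ t, |deriv v t| ≤ b)
    (hv'' : ∀ t, deriv (deriv v) t ≤ 0)
    (f : Fin m → (Fin d → ℝ) → ℝ) (hf0 : ∀ j x, 0 ≤ f j x)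
    (hfc : ∀ j, Continuous (f j))
    (g : (Fin d → ℝ) → ℝ) (hg0 : ∀ x, 0 ≤ g x)
    (hgc : Continuous g) (hgs : HasCompactSupport g)
    (W : (Fin m → ℝ) → ℝ)
    (hW : ∀ η, W η = ∫ x, v (∑ j, η j * f j x) * g x)
    (Z : ℝ)
    (hZ : Z = ∫ η, Real.exp (-W η) ∂(Measure.pi fun _ : Fin m => cPoisson c r))
    (μ : Measure (Fin m → ℝ))
    (hμ : μ = (Measure.pi fun _ : Fin m => cPoisson c r).withDensity
      (fun η => ENNReal.ofReal (Real.exp (-W η) / Z))) :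
    ∀ H₁ H₂ : (Fin m → ℝ) → ℝ, Continuous H₁ → Continuous H₂ →
      Monotone H₁ → Monotone H₂ →
      (∃ K κ : ℝ, 0 < K ∧ 0 < κ ∧ ∀ η, |H₁ η| ≤ K * Real.exp (κ * ∑ j, |η j|)) →
      (∃ K κ : ℝ, 0 < K ∧ 0 < κ ∧ ∀ η, |H₂ η| ≤ K * Real.exp (κ * ∑ j, |η j|)) →
      ∫ η, H₁ η * H₂ η ∂μ ≥ (∫ η, H₁ η ∂μ) * (∫ η, H₂ η ∂μ) := by
  rintro H₁ H₂ hH₁c hH₂c hH₁m hH₂m ⟨K₁, κ₁, -, hκ₁, hB₁⟩ ⟨K₂, κ₂, -, hκ₂, hB₂⟩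
  obtain rfl : W = latticeEnergy v f g := funext hW
  obtain rfl : μ = (Measure.pi fun _ : Fin m => cPoisson c r).tilted
      fun η => -latticeEnergy v f g η := by rw [hμ, hZ]; rfl
  have := isProbabilityMeasure_cPoisson hc.le r
  have hb : 0 ≤ b := (abs_nonneg _).trans (hv' 0)
  set κ₀ := b * ∫ x, (∑ j, f j x) * g x
  have hκ₀ : 0 ≤ κ₀ := mul_nonneg hb <|
    integral_nonneg fun x => mul_nonneg (Finset.sum_nonneg fun j _ => hf0 j x) (hg0 x)
  have hWle (η : Fin m → ℝ) : -latticeEnergy v f g η ≤ κ₀ * ∑ j, |η j| :=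
    (neg_le_abs _).trans <| abs_latticeEnergy_le hb
      (abs_le_mul_abs_of_abs_deriv_le (hv.differentiable two_ne_zero) hv0 hv') hv.continuous
      hf0 hfc hg0 hgc hgs η
  have hWm : Measurable fun η => -latticeEnergy v f g η :=
    (measurable_latticeEnergy hv.continuous hfc hgc).neg
  have := isProbabilityMeasure_tilted (integrable_exp_pi_cPoisson_of_le hc.le hsupp hκ₀ hWm hWle)
  have hFKG := (FourFunctionsInequality.pi (cPoisson c r) m).tilted hWm fun η ζ => by
    linarith [latticeEnergy_sup_add_inf_le (concaveOn_univ_of_deriv_deriv_nonpos hv hv'')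
      hv.continuous hf0 hfc hg0 hgc hgs η ζ]
  have hint := fun {u : (Fin m → ℝ) → ℝ} (hu : Continuous u) {K κ : ℝ} (hκ : 0 ≤ κ) =>
    integrable_tilted_pi_cPoisson (K := K) hc.le hsupp hκ₀ hWm hWle hu.measurable hκ
  refine hFKG.integral_mul_integral_le hH₁c.measurable hH₂c.measurable hH₁m hH₂m
    (hint hH₁c hκ₁.le hB₁) (hint hH₂c hκ₂.le hB₂)
    (hint (hH₁c.mul hH₂c) (K := K₁ * K₂) (add_pos hκ₁ hκ₂).le fun η => ?_)
  calc |H₁ η * H₂ η|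
      ≤ K₁ * Real.exp (κ₁ * ∑ j, |η j|) * (K₂ * Real.exp (κ₂ * ∑ j, |η j|)) := by
        rw [abs_mul]
        exact mul_le_mul (hB₁ η) (hB₂ η) (abs_nonneg _) ((abs_nonneg _).trans (hB₁ η))
    _ = K₁ * K₂ * Real.exp ((κ₁ + κ₂) * ∑ j, |η j|) := by rw [add_mul, Real.exp_add]; ring

/-- Proposition 3.4 of the paper: the lattice Gibbs measure
`μ = Z⁻¹ e^{-W} ρ^{⊗m}` with concave energy density satisfies the FKG inequality
for continuous, coordinatewise monotonically increasing, exponentially bounded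
observables. -/
theorem lattice_gibbs_FKG
    (d m : ℕ) (hm : 1 ≤ m) (C : ℝ) (hC : 0 < C)
    (r : Measure ℝ) [IsProbabilityMeasure r] (hsupp : r (Set.Icc (-C) C)ᶜ = 0)
    (c : ℝ) (hc : 0 < c)
    (v : ℝ → ℝ) (hv : ContDiff ℝ 2 v) (hv0 : v 0 = 0)
    (b : ℝ) (hb : 0 < b) (hv' : ∀ t, |deriv v t| ≤ b)
    (hv'' : ∀ t, deriv (deriv v) t ≤ 0)
    (f : Fin m → (Fin d → ℝ) → ℝ) (hf0 : ∀ j x, 0 ≤ f j x)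
    (hfc : ∀ j, Continuous (f j)) (hfs : ∀ j, HasCompactSupport (f j))
    (g : (Fin d → ℝ) → ℝ) (hg0 : ∀ x, 0 ≤ g x)
    (hgc : Continuous g) (hgs : HasCompactSupport g)
    (W : (Fin m → ℝ) → ℝ)
    (hW : ∀ η, W η = ∫ x, v (∑ j, η j * f j x) * g x)
    (Z : ℝ)
    (hZ : Z = ∫ η, Real.exp (-W η) ∂(Measure.pi fun _ : Fin m => cPoisson c r))
    (μ : Measure (Fin m → ℝ))
    (hμ : μ = (Measure.pi fun _ : Fin m => cPoisson c r).withDensity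
      (fun η => ENNReal.ofReal (Real.exp (-W η) / Z))) :
    ∀ H₁ H₂ : (Fin m → ℝ) → ℝ, Continuous H₁ → Continuous H₂ →
      Monotone H₁ → Monotone H₂ →
      (∃ K κ : ℝ, 0 < K ∧ 0 < κ ∧ ∀ η, |H₁ η| ≤ K * Real.exp (κ * ∑ j, |η j|)) →
      (∃ K κ : ℝ, 0 < K ∧ 0 < κ ∧ ∀ η, |H₂ η| ≤ K * Real.exp (κ * ∑ j, |η j|)) →
      ∫ η, H₁ η * H₂ η ∂μ ≥ (∫ η, H₁ η ∂μ) * (∫ η, H₂ η ∂μ) :=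
  lattice_gibbs_FKG_general d m C r hsupp c hc v hv hv0 b hv' hv'' f hf0 hfc g hg0 hgc hgs W hW Z hZ
    μ hμ
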